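/- Fix constants c > 0 and λ > 0 and a point x ∈ ℝ. For t > |x|/c, let f(x,t) = (λ·e^{-λ t}/(2c))·[ I₀((λ/c)·√(c²t² − x²)) + (ct/√(c²t² − x²))·I₁((λ/c)·√(c²t² − x²)) ] (the absolutely continuous part of the transition density of the Goldstein-Kac telegraph process with parameters c, λ), and let g(x,t) = e^{-λ t}/(π·√(c²t² − x²)) + (λ·e^{-λ t}/(2c))·[ I₀((λ/c)·√(c²t² − x²)) + L₀((λ/c)·√(c²t² − x²)) ] (the density of the marginals of the planar symmetric Markov random flight with the same parameters). Then |f(x,t) − g(x,t)| = O(t^{-1}) as t → ∞; that is, there exist constants C > 0 and T > |x|/c such that for all t ≥ T, |f(x,t) − g(x,t)| ≤ C·t^{-1}. -/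

import Mathlib

open Real Filter Topology

/-- Modified Bessel function of the first kind of nonnegative integer order `n`,
defined by its everywhere-convergent power series. -/
noncomputable def besselI (n : ℕ) (z : ℝ) : ℝ :=
  ∑' k : ℕ, (1 / (Nat.factorial k * Nat.factorial (k + n) : ℝ)) * (z / 2) ^ (2 * k + n)

/-- Modified Struve function of order zero, defined by its power series. -/
noncomputable def struveL0 (z : ℝ) : ℝ :=
  ∑' k : ℕ, (1 / (Real.Gamma ((k : ℝ) + 3 / 2)) ^ 2) * (z / 2) ^ (2 * k + 1)

/-!
Write `s = √(c²t² - x²)`, `w = λs/c` and `E = e^{-λt}`. Then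
`f - g = (λE/2c)·(ct/s - 1)·I₁(w) - (λE/2c)·(L₀(w) - I₁(w)) - E/(πs)`.
Integrating the sinh series term by term against Wallis' integrals gives
`(π/2)·I₁(w) = ∫₀^{π/2} sinh(w cos θ) cos θ dθ` and
`(π/2)·L₀(w) = ∫₀^{π/2} sinh(w cos θ) dθ`, hence `|I₁(w)| ≤ e^w` and
`|L₀(w) - I₁(w)| ≤ e^w / w`, because `sinh(wu)(1 - u) ≤ e^w / w` on `[0, 1]`.
Since `w ≤ λt`, the factor `E` absorbs `e^w`, and `ct/s - 1`, `1/s`, `1/w` are `O(1/t)`.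
-/

open MeasureTheory intervalIntegral
open scoped Nat

theorem integral_cos_pow_two_mul_add_two (k : ℕ) :
    ∫ θ in (0 : ℝ)..π / 2, cos θ ^ (2 * k + 2) =
      π * (2 * k + 1)! / (2 ^ (2 * k + 2) * k ! * (k + 1)!) := by
  induction k with
  | zero => simp [field]
  | succ k ih =>
    rw [show 2 * (k + 1) + 2 = 2 * k + 2 + 2 by ring, integral_cos_pow, ih,
      show 2 * (k + 1) + 1 = 2 * k + 1 + 1 + 1 by ring]
    simp only [Nat.factorial_succ, cos_pi_div_two, sin_pi_div_two, cos_zero, sin_zero]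
    push_cast
    field_simp
    ring

theorem integral_cos_pow_two_mul_add_one (k : ℕ) :
    ∫ θ in (0 : ℝ)..π / 2, cos θ ^ (2 * k + 1) =
      π * (2 * k + 1)! / (2 ^ (2 * k + 2) * Gamma (k + 3 / 2) ^ 2) := by
  induction k with
  | zero =>
    have hΓ : Gamma (3 / 2) = √π / 2 := by
      rw [show (3 / 2 : ℝ) = 1 / 2 + 1 by norm_num, Gamma_add_one (by norm_num),
        Gamma_one_half_eq]
      ring
    simp [hΓ, div_pow, sq_sqrt pi_pos.le, field]
  | succ k ih =>
    have hΓ : Gamma ((k + 1 : ℕ) + 3 / 2) = (k + 3 / 2) * Gamma (k + 3 / 2) := by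
      rw [← Gamma_add_one (by positivity)]
      push_cast
      ring_nf
    have hΓ_pos : 0 < Gamma (k + 3 / 2) := Gamma_pos_of_pos (by positivity)
    rw [show 2 * (k + 1) + 1 = 2 * k + 1 + 2 by ring, integral_cos_pow, ih, hΓ,
      show 2 * k + 1 + 2 = 2 * k + 1 + 1 + 1 by ring]
    simp only [Nat.factorial_succ, cos_pi_div_two, sin_pi_div_two, cos_zero, sin_zero]
    push_cast
    field_simp
    ring

theorem hasSum_integral_sinh_mul_cos_mul_cos_pow (w : ℝ) (m : ℕ) :
    HasSum (fun k : ℕ =>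
        w ^ (2 * k + 1) / (2 * k + 1)! * ∫ θ in (0 : ℝ)..π / 2, cos θ ^ (2 * k + 1 + m))
      (∫ θ in (0 : ℝ)..π / 2, sinh (w * cos θ) * cos θ ^ m) := by
  have hterm (k : ℕ) :
      w ^ (2 * k + 1) / (2 * k + 1)! * ∫ θ in (0 : ℝ)..π / 2, cos θ ^ (2 * k + 1 + m) =
        ∫ θ in (0 : ℝ)..π / 2, (w * cos θ) ^ (2 * k + 1) / (2 * k + 1)! * cos θ ^ m := by
    rw [← intervalIntegral.integral_const_mul]
    congr 1 with θ
    ring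
  simp_rw [hterm]
  refine hasSum_integral_of_dominated_convergence (fun k _ => |w| ^ (2 * k + 1) / (2 * k + 1)!)
    (fun k => by fun_prop) (fun k => ae_of_all _ fun θ _ => ?_)
    (ae_of_all _ fun _ _ => (hasSum_sinh |w|).summable) intervalIntegrable_const
    (ae_of_all _ fun θ _ => (hasSum_sinh _).mul_right _)
  rw [norm_mul, norm_div, norm_pow, norm_pow, norm_mul, Real.norm_natCast]
  simp only [Real.norm_eq_abs]
  calc (|w| * |cos θ|) ^ (2 * k + 1) / (2 * k + 1)! * |cos θ| ^ m
      ≤ (|w| * 1) ^ (2 * k + 1) / (2 * k + 1)! * 1 := by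
        gcongr
        · exact abs_cos_le_one θ
        · exact pow_le_one₀ (abs_nonneg _) (abs_cos_le_one θ)
    _ = |w| ^ (2 * k + 1) / (2 * k + 1)! := by ring

theorem integral_sinh_mul_cos_mul_cos (w : ℝ) :
    ∫ θ in (0 : ℝ)..π / 2, sinh (w * cos θ) * cos θ = π / 2 * besselI 1 w := by
  have h := hasSum_integral_sinh_mul_cos_mul_cos_pow w 1
  simp only [pow_one] at h
  rw [← h.tsum_eq, besselI, ← tsum_mul_left]
  refine tsum_congr fun k => ?_
  rw [integral_cos_pow_two_mul_add_two, div_pow]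
  field_simp
  ring

theorem integral_sinh_mul_cos (w : ℝ) :
    ∫ θ in (0 : ℝ)..π / 2, sinh (w * cos θ) = π / 2 * struveL0 w := by
  have h := hasSum_integral_sinh_mul_cos_mul_cos_pow w 0
  simp only [pow_zero, mul_one, add_zero] at h
  rw [← h.tsum_eq, struveL0, ← tsum_mul_left]
  refine tsum_congr fun k => ?_
  have hΓ_pos : 0 < Gamma (k + 3 / 2) := Gamma_pos_of_pos (by positivity)
  rw [integral_cos_pow_two_mul_add_one, div_pow]
  field_simp
  ring

theorem sinh_le_exp (x : ℝ) : sinh x ≤ exp x := by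
  linarith [sinh_add_cosh x, cosh_pos x]

theorem abs_le_of_integral_eq_sub_mul {f : ℝ → ℝ} {a b X C : ℝ} (hab : a < b)
    (hf : ∫ x in a..b, f x = (b - a) * X) (hC : ∀ x ∈ Set.Ioc a b, |f x| ≤ C) :
    |X| ≤ C := by
  have h := norm_integral_le_of_norm_le_const (f := f) (C := C) (by
    rwa [Set.uIoc_of_le hab.le])
  rw [hf, Real.norm_eq_abs, abs_mul, abs_of_pos (sub_pos.2 hab), mul_comm] at h
  exact le_of_mul_le_mul_right h (sub_pos.2 hab)

theorem abs_besselI_one_le_exp_abs (w : ℝ) : |besselI 1 w| ≤ exp |w| := by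
  refine abs_le_of_integral_eq_sub_mul (a := 0) (b := π / 2) (by positivity)
    (f := fun θ => sinh (w * cos θ) * cos θ)
    (by rw [integral_sinh_mul_cos_mul_cos, sub_zero]) fun θ _ => ?_
  have hwθ : |w * cos θ| ≤ |w| := by
    rw [abs_mul]
    exact mul_le_of_le_one_right (abs_nonneg w) (abs_cos_le_one θ)
  rw [abs_mul, abs_sinh, ← mul_one (exp |w|)]
  exact mul_le_mul ((sinh_le_exp _).trans (exp_le_exp.2 hwθ)) (abs_cos_le_one θ)
    (abs_nonneg _) (exp_pos _).le

theorem abs_sinh_mul_mul_one_sub_le {w u : ℝ} (hw : 0 < w) (hu₀ : 0 ≤ u) (hu₁ : u ≤ 1) :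
    |sinh (w * u) * (1 - u)| ≤ exp w / w := by
  rw [abs_of_nonneg (mul_nonneg (sinh_nonneg_iff.2 (by positivity)) (sub_nonneg.2 hu₁)),
    le_div_iff₀ hw]
  calc sinh (w * u) * (1 - u) * w = sinh (w * u) * (w * (1 - u)) := by ring
    _ ≤ exp (w * u) * exp (w * (1 - u)) :=
        mul_le_mul (sinh_le_exp _) (by linarith [add_one_le_exp (w * (1 - u))])
          (mul_nonneg hw.le (sub_nonneg.2 hu₁)) (exp_pos _).le
    _ = exp w := by rw [← exp_add]; ring_nf

theorem abs_struveL0_sub_besselI_one_le {w : ℝ} (hw : 0 < w) :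
    |struveL0 w - besselI 1 w| ≤ exp w / w := by
  refine abs_le_of_integral_eq_sub_mul (a := 0) (b := π / 2) (by positivity)
    (f := fun θ => sinh (w * cos θ) * (1 - cos θ)) ?_ fun θ hθ => ?_
  · simp only [mul_one_sub]
    rw [intervalIntegral.integral_sub (Continuous.intervalIntegrable (by fun_prop) _ _)
      (Continuous.intervalIntegrable (by fun_prop) _ _), integral_sinh_mul_cos,
      integral_sinh_mul_cos_mul_cos, sub_zero, mul_sub]
  · exact abs_sinh_mul_mul_one_sub_le hw
      (cos_nonneg_of_mem_Icc ⟨by linarith [hθ.1, pi_pos], hθ.2⟩) (cos_le_one θ)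

theorem half_le_sqrt_sq_sub_sq {r x : ℝ} (h : 2 * |x| ≤ r) : r / 2 ≤ √(r ^ 2 - x ^ 2) := by
  have hx : x ^ 2 ≤ (r / 2) ^ 2 := by
    rw [← sq_abs]
    exact pow_le_pow_left₀ (abs_nonneg x) (by linarith) 2
  exact Real.le_sqrt_of_sq_le (by nlinarith [abs_nonneg x])

theorem sqrt_sq_sub_sq_le_self {r x : ℝ} (hr : 0 ≤ r) : √(r ^ 2 - x ^ 2) ≤ r :=
  (Real.sqrt_le_sqrt (sub_le_self _ (sq_nonneg x))).trans_eq (Real.sqrt_sq hr)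

theorem abs_div_sqrt_sq_sub_sq_sub_one_le {r x : ℝ} (hr : 0 < r) (h : 2 * |x| ≤ r) :
    |r / √(r ^ 2 - x ^ 2) - 1| ≤ |x| / r := by
  set s := √(r ^ 2 - x ^ 2)
  have hs_half : r / 2 ≤ s := half_le_sqrt_sq_sub_sq h
  have hs_pos : 0 < s := by linarith
  have hs_sq : s ^ 2 = r ^ 2 - x ^ 2 := Real.sq_sqrt (by nlinarith [sq_abs x, abs_nonneg x])
  have hs_le : s ≤ r := sqrt_sq_sub_sq_le_self hr.le
  rw [abs_of_nonneg (by rw [sub_nonneg, one_le_div hs_pos]; exact hs_le), div_sub_one hs_pos.ne',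
    div_le_div_iff₀ hs_pos hr]
  -- `(r - s) * r ≤ (r - s) * (r + s) = |x| ^ 2 ≤ |x| * (r / 2) ≤ |x| * s`
  linarith [sq_abs x, mul_nonneg (sub_nonneg.2 hs_le) hs_pos.le,
    mul_nonneg (abs_nonneg x) (by linarith : (0 : ℝ) ≤ r / 2 - |x|),
    mul_nonneg (abs_nonneg x) (sub_nonneg.2 hs_half)]

theorem abs_mul_besselI_one_le_one {E w : ℝ} (hE : 0 ≤ E) (hw : 0 ≤ w)
    (hEw : E * exp w ≤ 1) : |E * besselI 1 w| ≤ 1 := by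
  rw [abs_mul, abs_of_nonneg hE]
  calc E * |besselI 1 w| ≤ E * exp |w| := by gcongr; exact abs_besselI_one_le_exp_abs w
    _ ≤ 1 := by rwa [abs_of_nonneg hw]

theorem abs_mul_struveL0_sub_besselI_one_le {E w : ℝ} (hE : 0 ≤ E) (hw : 0 < w)
    (hEw : E * exp w ≤ 1) : |E * (struveL0 w - besselI 1 w)| ≤ 1 / w := by
  rw [abs_mul, abs_of_nonneg hE]
  calc E * |struveL0 w - besselI 1 w| ≤ E * (exp w / w) := by
        gcongr; exact abs_struveL0_sub_besselI_one_le hw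
    _ ≤ 1 / w := by rw [← mul_div_assoc]; gcongr

noncomputable def telegraphDensity (c lam x t : ℝ) : ℝ :=
  lam * exp (-(lam * t)) / (2 * c) *
    (besselI 0 (lam / c * √(c ^ 2 * t ^ 2 - x ^ 2)) +
      c * t / √(c ^ 2 * t ^ 2 - x ^ 2) * besselI 1 (lam / c * √(c ^ 2 * t ^ 2 - x ^ 2)))

noncomputable def planarFlightDensity (c lam x t : ℝ) : ℝ :=
  exp (-(lam * t)) / (π * √(c ^ 2 * t ^ 2 - x ^ 2)) +
    lam * exp (-(lam * t)) / (2 * c) *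
      (besselI 0 (lam / c * √(c ^ 2 * t ^ 2 - x ^ 2)) +
        struveL0 (lam / c * √(c ^ 2 * t ^ 2 - x ^ 2)))

theorem abs_telegraphDensity_sub_planarFlightDensity_le {c lam x t : ℝ} (hc : 0 < c)
    (hlam : 0 < lam) (ht₀ : 0 < t) (ht : 2 * |x| ≤ c * t) :
    |telegraphDensity c lam x t - planarFlightDensity c lam x t| ≤
      (lam * |x| / (2 * c ^ 2) + 2 / c) * t⁻¹ := by
  have hr : 0 < c * t := by positivity
  rw [telegraphDensity, planarFlightDensity, show c ^ 2 * t ^ 2 = (c * t) ^ 2 by ring]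
  set s := √((c * t) ^ 2 - x ^ 2)
  have hs_half : c * t / 2 ≤ s := half_le_sqrt_sq_sub_sq ht
  have hs_pos : 0 < s := by linarith
  have hs_le : s ≤ c * t := sqrt_sq_sub_sq_le_self hr.le
  set w := lam / c * s with hw_def
  have hw_pos : 0 < w := by positivity
  set E := exp (-(lam * t))
  have hE_pos : 0 < E := exp_pos _
  have hEw : E * exp w ≤ 1 := by
    rw [← exp_add, exp_le_one_iff, hw_def, div_mul_eq_mul_div, neg_add_nonpos_iff,
      div_le_iff₀ hc]
    nlinarith
  have hlc : 0 < lam / (2 * c) := by positivity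
  set A := lam / (2 * c) * (c * t / s - 1) * (E * besselI 1 w) with hA_def
  set B := lam / (2 * c) * (E * (struveL0 w - besselI 1 w)) with hB_def
  set D := E / (π * s) with hD_def
  have hA : |A| ≤ lam / (2 * c) * (|x| / (c * t)) * 1 := by
    rw [hA_def, abs_mul, abs_mul, abs_of_pos hlc]
    gcongr
    · exact abs_div_sqrt_sq_sub_sq_sub_one_le hr ht
    · exact abs_mul_besselI_one_le_one hE_pos.le hw_pos.le hEw
  have hB : |B| ≤ 1 / (2 * s) := by
    rw [hB_def, abs_mul, abs_of_pos hlc]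
    calc lam / (2 * c) * |E * (struveL0 w - besselI 1 w)| ≤ lam / (2 * c) * (1 / w) := by
          gcongr; exact abs_mul_struveL0_sub_besselI_one_le hE_pos.le hw_pos hEw
      _ = 1 / (2 * s) := by rw [hw_def]; field_simp
  have hD : |D| ≤ 1 / (2 * s) := by
    have hE_le : E ≤ 1 := exp_le_one_iff.2 (neg_nonpos.2 (by positivity))
    rw [hD_def, abs_of_pos (by positivity)]
    gcongr
    linarith [pi_gt_three]
  have hs_inv : 1 / (2 * s) + 1 / (2 * s) ≤ 2 / (c * t) := by
    rw [← add_div, div_le_div_iff₀ (by positivity) hr]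
    linarith
  calc _ = |A - B - D| := by congr 1; ring
    _ ≤ |A - B| + |D| := abs_sub _ _
    _ ≤ |A| + |B| + |D| := by gcongr; exact abs_sub _ _
    _ ≤ lam / (2 * c) * (|x| / (c * t)) * 1 + 2 / (c * t) := by linarith
    _ = (lam * |x| / (2 * c ^ 2) + 2 / c) * t⁻¹ := by field_simp

theorem telegraph_marginal_density_difference (c lam x : ℝ) (hc : 0 < c) (hlam : 0 < lam) :
    ∃ C > 0, ∃ T > |x| / c, ∀ t ≥ T,
      |lam * Real.exp (-(lam * t)) / (2 * c) *
            (besselI 0 (lam / c * Real.sqrt (c ^ 2 * t ^ 2 - x ^ 2)) +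
              c * t / Real.sqrt (c ^ 2 * t ^ 2 - x ^ 2) *
                besselI 1 (lam / c * Real.sqrt (c ^ 2 * t ^ 2 - x ^ 2))) -
          (Real.exp (-(lam * t)) / (Real.pi * Real.sqrt (c ^ 2 * t ^ 2 - x ^ 2)) +
            lam * Real.exp (-(lam * t)) / (2 * c) *
              (besselI 0 (lam / c * Real.sqrt (c ^ 2 * t ^ 2 - x ^ 2)) +
                struveL0 (lam / c * Real.sqrt (c ^ 2 * t ^ 2 - x ^ 2))))| ≤ C * t⁻¹ := by
  refine ⟨lam * |x| / (2 * c ^ 2) + 2 / c, by positivity, 2 * |x| / c + 1, ?_, fun t ht => ?_⟩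
  · have : 0 ≤ |x| / c := by positivity
    linarith [show 2 * |x| / c = 2 * (|x| / c) by ring]
  · have hx : 0 ≤ 2 * |x| / c := by positivity
    exact abs_telegraphDensity_sub_planarFlightDensity_le hc hlam (by linarith)
      ((div_le_iff₀' hc).1 (by linarith))
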